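/- arXiv:1901.08654 — 4 statements merged into one kernel-verified Lean document; each statement's English description precedes it below -/
import Mathlib

section
/- Let N ≥ 2 and let X_1, X_2, …, X_t be i.i.d. random variables taking values in {1, …, N} with P(X_s = k) = f_k for each k. Fix indices i and j with f_j > f_i. Then the probability that the empirical count of i is at least the empirical count of j, i.e. P(#{s ≤ t : X_s = i} ≥ #{s ≤ t : X_s = j}), is at most exp(-t·(√f_j - √f_i)²). -/
/-!
Put `Y_s = 𝟙{X_s = i} - 𝟙{X_s = j}`, so that the event is `0 ≤ ∑_{s < t} Y_s`. With
`p = P(X_s = i)` and `q = P(X_s = j)`, independence and the Chernoff bound give the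
probability at most `M(l)^t` for every `l ≥ 0`, where `M(l) = 1 + (eˡ - 1) p + (e⁻ˡ - 1) q`
is the moment generating function of `Y_s`. At `eˡ = √q / √p` one gets
`M(l) = 1 - (√q - √p)² ≤ exp (-(√q - √p)²)`.
-/

open MeasureTheory ProbabilityTheory Filter Topology Real

/-- The moment generating function of `𝟙_A - 𝟙_B` for disjoint events of probabilities `p`, `q`. -/
noncomputable def indicatorSubMGF (p q l : ℝ) : ℝ :=
  1 + (exp l - 1) * p + (exp (-l) - 1) * q

lemma indicatorSubMGF_log_sqrt_div {p q : ℝ} (hp : 0 < p) (hq : 0 < q) :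
    indicatorSubMGF p q (log (√q / √p)) = 1 - (√q - √p) ^ 2 := by
  have hsp : 0 < √p := sqrt_pos.mpr hp
  have hsq : 0 < √q := sqrt_pos.mpr hq
  rw [indicatorSubMGF, exp_log (div_pos hsq hsp), exp_neg, exp_log (div_pos hsq hsp)]
  field_simp
  linear_combination (√p * √q - √q ^ 2) * sq_sqrt hp.le + (√p * √q - √p ^ 2) * sq_sqrt hq.le

lemma tendsto_indicatorSubMGF_zero_atTop (q : ℝ) :
    Tendsto (indicatorSubMGF 0 q) atTop (𝓝 (1 - q)) := by
  convert ((tendsto_exp_neg_atTop_nhds_zero.sub_const 1).mul_const q).const_add 1 using 2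
  · simp [indicatorSubMGF]
  · ring

lemma le_pow_of_forall_le_indicatorSubMGF_pow {a p q : ℝ} (hp : 0 ≤ p) (hpq : p ≤ q) (t : ℕ)
    (h : ∀ l, 0 ≤ l → a ≤ indicatorSubMGF p q l ^ t) : a ≤ (1 - (√q - √p) ^ 2) ^ t := by
  rcases hp.eq_or_lt with rfl | hp
  · -- with `p = 0` the infimum over `l` is only approached as `l → ∞`
    rw [sqrt_zero, sub_zero, sq_sqrt hpq]
    exact ge_of_tendsto ((tendsto_indicatorSubMGF_zero_atTop q).pow t)
      ((eventually_ge_atTop 0).mono h)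
  · have hq : 0 < q := hp.trans_le hpq
    rw [← indicatorSubMGF_log_sqrt_div hp hq]
    exact h _ (log_nonneg ((one_le_div (sqrt_pos.mpr hp)).mpr (sqrt_le_sqrt hpq)))

section IndicatorSub

variable {Ω : Type*} {A B : Set Ω}

lemma exp_mul_indicator_sub_indicator (hAB : Disjoint A B) (l : ℝ) (ω : Ω) :
    exp (l * (A.indicator 1 ω - B.indicator 1 ω)) =
      1 + (exp l - 1) * A.indicator 1 ω + (exp (-l) - 1) * B.indicator 1 ω := by
  by_cases hA : ω ∈ A
  · simp [hA, hAB.notMem_of_mem_left hA]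
  · by_cases hB : ω ∈ B <;> simp [hA, hB]

variable [MeasurableSpace Ω] {μ : Measure Ω} [IsProbabilityMeasure μ]
  (hA : MeasurableSet A) (hB : MeasurableSet B) (hAB : Disjoint A B) (l : ℝ)
include hA hB hAB

lemma integrable_exp_mul_indicator_sub_indicator :
    Integrable (fun ω ↦ exp (l * (A.indicator 1 - B.indicator 1 : Ω → ℝ) ω)) μ := by
  have : Integrable (A.indicator (1 : Ω → ℝ)) μ := (integrable_const 1).indicator hA
  have : Integrable (B.indicator (1 : Ω → ℝ)) μ := (integrable_const 1).indicator hB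
  simp only [Pi.sub_apply, exp_mul_indicator_sub_indicator hAB]
  fun_prop

lemma mgf_indicator_sub_indicator :
    mgf (A.indicator 1 - B.indicator 1) μ l = indicatorSubMGF (μ.real A) (μ.real B) l := by
  have : Integrable (A.indicator (1 : Ω → ℝ)) μ := (integrable_const 1).indicator hA
  have : Integrable (B.indicator (1 : Ω → ℝ)) μ := (integrable_const 1).indicator hB
  simp only [mgf, Pi.sub_apply, exp_mul_indicator_sub_indicator hAB]
  rw [integral_add (by fun_prop) (by fun_prop), integral_add (by fun_prop) (by fun_prop),
    integral_const_mul, integral_const_mul, integral_indicator_one hA, integral_indicator_one hB]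
  simp [indicatorSubMGF]

end IndicatorSub

lemma measureReal_card_filter_le_card_filter_le_pow {Ω α : Type*} [MeasurableSpace Ω]
    {P : Measure Ω} [IsProbabilityMeasure P] [MeasurableSpace α] [MeasurableSingletonClass α]
    [DecidableEq α] {X : ℕ → Ω → α} (hX : ∀ s, Measurable (X s)) (hindep : iIndepFun X P)
    {i j : α} (hij : i ≠ j) {p q : ℝ} (hp : ∀ s, P.real (X s ⁻¹' {i}) = p)
    (hq : ∀ s, P.real (X s ⁻¹' {j}) = q) (t : ℕ) {l : ℝ} (hl : 0 ≤ l) :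
    P.real {ω | ((Finset.range t).filter fun s => X s ω = j).card ≤
        ((Finset.range t).filter fun s => X s ω = i).card} ≤ indicatorSubMGF p q l ^ t := by
  set φ : α → ℝ := ({i} : Set α).indicator 1 - ({j} : Set α).indicator 1
  -- `Y s` is definitionally `φ ∘ X s`, which transfers measurability and independence
  set Y : ℕ → Ω → ℝ := fun s ↦ (X s ⁻¹' {i}).indicator 1 - (X s ⁻¹' {j}).indicator 1
  have hφ : Measurable φ :=
    (measurable_const.indicator (measurableSet_singleton i)).sub
      (measurable_const.indicator (measurableSet_singleton j))
  have hYmeas : ∀ s, Measurable (Y s) := fun s ↦ hφ.comp (hX s)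
  have hYindep : iIndepFun Y P := hindep.comp (fun _ ↦ φ) (fun _ ↦ hφ)
  have hA : ∀ s, MeasurableSet (X s ⁻¹' {i}) := fun s ↦ hX s (measurableSet_singleton i)
  have hB : ∀ s, MeasurableSet (X s ⁻¹' {j}) := fun s ↦ hX s (measurableSet_singleton j)
  have hAB : ∀ s, Disjoint (X s ⁻¹' {i}) (X s ⁻¹' {j}) := fun s ↦
    (Set.disjoint_singleton.mpr hij).preimage _
  have hevent : {ω | ((Finset.range t).filter fun s => X s ω = j).card ≤
        ((Finset.range t).filter fun s => X s ω = i).card} =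
      {ω | 0 ≤ (∑ s ∈ Finset.range t, Y s) ω} := by
    ext ω
    classical
    simp only [Y, Set.mem_ofPred_eq, Finset.sum_apply, Pi.sub_apply, Set.indicator_apply,
      Set.mem_preimage, Set.mem_singleton_iff, Pi.one_apply, Finset.sum_sub_distrib,
      Finset.sum_boole, sub_nonneg, Nat.cast_le]
  have hint : Integrable (fun ω ↦ exp (l * (∑ s ∈ Finset.range t, Y s) ω)) P :=
    hYindep.integrable_exp_mul_sum hYmeas fun s _ ↦
      integrable_exp_mul_indicator_sub_indicator (hA s) (hB s) (hAB s) l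
  calc _ ≤ exp (-l * 0) * mgf (∑ s ∈ Finset.range t, Y s) P l :=
        hevent ▸ measure_ge_le_exp_mul_mgf 0 hl hint
    _ = ∏ s ∈ Finset.range t, mgf (Y s) P l := by
      rw [mul_zero, exp_zero, one_mul, hYindep.mgf_sum hYmeas]
    _ = indicatorSubMGF p q l ^ t := by
      rw [Finset.prod_eq_pow_card fun s _ ↦ ?_, Finset.card_range]
      rw [mgf_indicator_sub_indicator (hA s) (hB s) (hAB s), hp, hq]

theorem chernoff_empirical_counts_general {Ω : Type*} [MeasurableSpace Ω]
    (P : Measure Ω) [IsProbabilityMeasure P]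
    (N : ℕ) (f : Fin N → ℝ) (t : ℕ)
    (X : ℕ → Ω → Fin N) (hX : ∀ s, Measurable (X s))
    (hindep : iIndepFun X P)
    (hdist : ∀ (s : ℕ) (k : Fin N), P {ω | X s ω = k} = ENNReal.ofReal (f k))
    (i j : Fin N) (hij : f i < f j) :
    P {ω | ((Finset.range t).filter fun s => X s ω = j).card ≤
        ((Finset.range t).filter fun s => X s ω = i).card} ≤
      ENNReal.ofReal (Real.exp (-(t : ℝ) * (Real.sqrt (f j) - Real.sqrt (f i)) ^ 2)) := by
  -- `P` only sees `max (f k) 0`, and so does `√(f k)`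
  have hlaw : ∀ s k, P.real (X s ⁻¹' {k}) = max (f k) 0 := fun s k ↦ by
    rw [measureReal_def, ← ENNReal.toReal_ofReal', ← hdist s k]; rfl
  have hsqrt : ∀ k, √(max (f k) 0) = √(f k) := fun k ↦ by
    rw [← sq_sqrt', sqrt_sq (sqrt_nonneg _)]
  have hpq : max (f i) 0 ≤ max (f j) 0 := max_le_max_right 0 hij.le
  have hq1 : max (f j) 0 ≤ 1 := hlaw 0 j ▸ measureReal_le_one
  have hd1 : (√(f j) - √(f i)) ^ 2 ≤ 1 := by
    rw [← hsqrt i, ← hsqrt j]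
    nlinarith [hq1, sqrt_le_sqrt hpq, sqrt_nonneg (max (f i) 0), sq_sqrt (le_max_right (f j) 0)]
  have hchernoff := le_pow_of_forall_le_indicatorSubMGF_pow (le_max_right _ 0) hpq t
    fun l hl ↦ measureReal_card_filter_le_card_filter_le_pow hX hindep
      (fun h ↦ hij.ne (congrArg f h)) (hlaw · i) (hlaw · j) t hl
  rw [hsqrt, hsqrt] at hchernoff
  rw [ENNReal.le_ofReal_iff_toReal_le (measure_ne_top P _) (exp_nonneg _), neg_mul,
    ← mul_neg, exp_nat_mul]
  exact hchernoff.trans (pow_le_pow_left₀ (sub_nonneg.mpr hd1) (one_sub_le_exp_neg _) t)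

/-- Chernoff bound for empirical arm-pull counts. If `X_1, …, X_t` are
i.i.d. with values in `{1, …, N}` and `P(X_s = k) = f k`, and `f j > f i`, then the
probability that the empirical count of `i` is at least the empirical count of `j`
is at most `exp (-t · (√(f j) - √(f i))²)`. -/
theorem chernoff_empirical_counts {Ω : Type*} [MeasurableSpace Ω]
    (P : Measure Ω) [IsProbabilityMeasure P]
    (N : ℕ) (hN : 2 ≤ N) (f : Fin N → ℝ) (t : ℕ)
    (X : ℕ → Ω → Fin N) (hX : ∀ s, Measurable (X s))
    (hindep : iIndepFun X P)
    (hdist : ∀ (s : ℕ) (k : Fin N), P {ω | X s ω = k} = ENNReal.ofReal (f k))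
    (i j : Fin N) (hij : f i < f j) :
    P {ω | ((Finset.range t).filter fun s => X s ω = j).card ≤
        ((Finset.range t).filter fun s => X s ω = i).card} ≤
      ENNReal.ofReal (Real.exp (-(t : ℝ) * (Real.sqrt (f j) - Real.sqrt (f i)) ^ 2)) :=
  chernoff_empirical_counts_general P N f t X hX hindep hdist i j hij
end

section
/- Let N ≥ 2, let μ : {1,…,N} → ℝ be arm means with a unique maximizer j* (write μ* = μ_{j*}), and let h_1, h_2, … be i.i.d. random variables on {1,…,N} with P(h_s = k) = f_k, where f_{j*} > f_i for every i ≠ j*. For each t let A_t be any random variable, measurable with respect to h_1, …, h_t, satisfying #{s ≤ t : h_s = A_t} ≥ #{s ≤ t : h_s = i} for all i (i.e. A_t is a most frequently pulled arm so far). Then for every horizon T, the expected regret satisfies E[∑_{t=1}^T (μ* - μ_{A_t})] ≤ ∑_{i ≠ j*} (μ* - μ_i) / (√f_{j*} - √f_i)². -/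
open MeasureTheory ProbabilityTheory Finset

/-!
If the robot plays arm `i ≠ j*` at round `t`, then among the first `t + 1` human pulls arm `i`
occurred at least as often as `j*`. The difference of the two counts is a sum of i.i.d. steps
`+1, -1, 0` with probabilities `f i, f j*, 1 - f i - f j*`, so by the Chernoff bound this has
probability at most `ρ ^ (t + 1)` with `ρ = 1 - (√f j* - √f i)²`. Summing the geometric series
over `t` bounds the expected number of rounds in which arm `i` is played by `(√f j* - √f i)⁻²`,
uniformly in the horizon.
-/

section Integral

variable {Ω α : Type*} [MeasurableSpace Ω] {P : Measure Ω} [Fintype α] [MeasurableSpace α]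
  [MeasurableSingletonClass α] {Y : Ω → α}

theorem integral_comp_eq_sum_measureReal [IsFiniteMeasure P] (hY : Measurable Y)
    (w : α → ℝ) : ∫ ω, w (Y ω) ∂P = ∑ k, P.real {ω | Y ω = k} * w k := by
  rw [← integral_map hY.aemeasurable (by fun_prop), integral_fintype Integrable.of_finite]
  refine sum_congr rfl fun k _ => ?_
  rw [map_measureReal_apply hY (measurableSet_singleton k), smul_eq_mul]
  rfl

theorem sum_measureReal_fiber_eq_one [IsProbabilityMeasure P] (hY : Measurable Y) :
    ∑ k, P.real {ω | Y ω = k} = 1 := by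
  simpa using (integral_comp_eq_sum_measureReal (P := P) hY fun _ => (1 : ℝ)).symm

end Integral

section PullCount

variable {Ω α : Type*} [DecidableEq α]

def pullCount (X : ℕ → Ω → α) (n : ℕ) (k : α) (ω : Ω) : ℕ :=
  #{s ∈ range n | X s ω = k}

def pullDiff (i j k : α) : ℝ :=
  (if k = i then 1 else 0) - (if k = j then 1 else 0)

theorem sum_pullDiff (X : ℕ → Ω → α) (n : ℕ) (i j : α) (ω : Ω) :
    ∑ s ∈ range n, pullDiff i j (X s ω) = (pullCount X n i ω : ℝ) - pullCount X n j ω := by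
  simp only [pullDiff, sum_sub_distrib, sum_boole, pullCount]

theorem pullCount_pos_of_forall_le {X : ℕ → Ω → α} {n : ℕ} {a : α} {ω : Ω} (hn : 0 < n)
    (ha : ∀ k, pullCount X n k ω ≤ pullCount X n a ω) : 0 < pullCount X n a ω :=
  (card_pos.mpr ⟨0, by simp [hn]⟩).trans_le (ha (X 0 ω))

theorem measure_pullCount_pos_eq_zero [MeasurableSpace Ω] {P : Measure Ω} {X : ℕ → Ω → α}
    {k : α} (hk : ∀ s, P {ω | X s ω = k} = 0) (n : ℕ) : P {ω | 0 < pullCount X n k ω} = 0 := by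
  refine measure_mono_null (fun ω hω => ?_)
    ((measure_biUnion_null_iff (range n).countable_toSet).mpr fun s _ => hk s)
  obtain ⟨s, hs⟩ := card_pos.mp hω
  simp only [mem_filter, mem_range] at hs
  exact Set.mem_biUnion (by simpa using hs.1) hs.2

end PullCount

section Chernoff

variable {Ω α : Type*} [MeasurableSpace Ω] {P : Measure Ω} [IsProbabilityMeasure P]
  [Fintype α] [DecidableEq α] [MeasurableSpace α] [MeasurableSingletonClass α]
  {p : α → ℝ} {i j : α}

-- `exp c = √(p j / p i)` minimizes `p i * exp c + p j * exp (-c)`, with minimum `2 √(p i p j)`.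
theorem mgf_pullDiff {Y : Ω → α} (hY : Measurable Y) (hp : ∀ k, P.real {ω | Y ω = k} = p k)
    (hij : i ≠ j) (hi : 0 < p i) (hj : 0 < p j) :
    mgf (fun ω => pullDiff i j (Y ω)) P (Real.log (√(p j) / √(p i))) =
      1 - (√(p j) - √(p i)) ^ 2 := by
  have hsi := Real.sqrt_pos.mpr hi
  have hsj := Real.sqrt_pos.mpr hj
  have hai : p i * (√(p j) / √(p i)) = √(p i) * √(p j) := by
    field_simp; rw [Real.sq_sqrt hi.le]
  have haj : p j * (√(p j) / √(p i))⁻¹ = √(p i) * √(p j) := by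
    field_simp; rw [Real.sq_sqrt hj.le]
  set a := √(p j) / √(p i)
  have ha : 0 < a := by positivity
  have hexp : ∀ k, Real.exp (Real.log a * pullDiff i j k) =
      1 + (if k = i then a - 1 else 0) + (if k = j then a⁻¹ - 1 else 0) := by
    intro k
    by_cases hki : k = i
    · subst hki; simp [pullDiff, hij, Real.exp_log ha]
    · by_cases hkj : k = j
      · subst hkj; simp [pullDiff, hki, Real.exp_neg, Real.exp_log ha]
      · simp [pullDiff, hki, hkj]
  have hsum : ∑ k, p k = 1 := by simpa only [hp] using sum_measureReal_fiber_eq_one (P := P) hY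
  rw [mgf, integral_comp_eq_sum_measureReal hY (fun k => Real.exp (Real.log a * pullDiff i j k))]
  simp only [hp, hexp, mul_add, mul_one, sum_add_distrib, hsum, mul_ite, mul_zero, sum_ite_eq',
    mem_univ, if_true]
  nlinarith [Real.sq_sqrt hi.le, Real.sq_sqrt hj.le]

theorem measureReal_pullCount_le_pullCount_le {X : ℕ → Ω → α} (hX : ∀ s, Measurable (X s))
    (hindep : iIndepFun X P) (hp : ∀ s k, P.real {ω | X s ω = k} = p k) (hij : i ≠ j)
    (hi : 0 < p i) (hpij : p i ≤ p j) (n : ℕ) :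
    P.real {ω | pullCount X n j ω ≤ pullCount X n i ω} ≤ (1 - (√(p j) - √(p i)) ^ 2) ^ n := by
  set c := Real.log (√(p j) / √(p i))
  set Z : ℕ → Ω → ℝ := fun s ω => pullDiff i j (X s ω)
  have hZ : ∀ s, Measurable (Z s) := fun s => (measurable_of_finite (pullDiff i j)).comp (hX s)
  have hZindep : iIndepFun Z P :=
    hindep.comp (fun _ => pullDiff i j) fun _ => measurable_of_finite _
  have hc : 0 ≤ c :=
    Real.log_nonneg <| (one_le_div (Real.sqrt_pos.mpr hi)).mpr (Real.sqrt_le_sqrt hpij)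
  have hint : ∀ s ∈ range n, Integrable (fun ω => Real.exp (c * Z s ω)) P := fun s _ =>
    (Integrable.of_finite (μ := P.map (X s))
      (f := fun k => Real.exp (c * pullDiff i j k))).comp_measurable (hX s)
  have hevent : {ω | pullCount X n j ω ≤ pullCount X n i ω} =
      {ω | 0 ≤ (∑ s ∈ range n, Z s) ω} := by
    ext ω
    simp only [Set.mem_ofPred_eq, Finset.sum_apply, Z, sum_pullDiff, sub_nonneg, Nat.cast_le]
  calc P.real {ω | pullCount X n j ω ≤ pullCount X n i ω}
      ≤ Real.exp (-c * 0) * mgf (∑ s ∈ range n, Z s) P c := by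
        rw [hevent]
        exact measure_ge_le_exp_mul_mgf 0 hc (hZindep.integrable_exp_mul_sum hZ hint)
    _ = ∏ s ∈ range n, mgf (Z s) P c := by
        rw [mul_zero, Real.exp_zero, one_mul, hZindep.mgf_sum hZ]
    _ = (1 - (√(p j) - √(p i)) ^ 2) ^ n := by
        rw [prod_congr rfl fun s _ => mgf_pullDiff (hX s) (hp s) hij hi (hi.trans_le hpij),
          prod_const, card_range]

theorem measureReal_eq_le_of_forall_pullCount_le {X : ℕ → Ω → α} (hX : ∀ s, Measurable (X s))
    (hindep : iIndepFun X P) (hp : ∀ s k, P.real {ω | X s ω = k} = p k) {A : Ω → α} {n : ℕ}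
    (hn : 0 < n) (hA : ∀ ω k, pullCount X n k ω ≤ pullCount X n (A ω) ω) (hij : i ≠ j)
    (hpij : p i ≤ p j) :
    P.real {ω | A ω = i} ≤ (1 - (√(p j) - √(p i)) ^ 2) ^ n := by
  rcases (hp 0 i ▸ measureReal_nonneg : 0 ≤ p i).eq_or_lt with hi | hi
  · have hnull : P {ω | A ω = i} = 0 := by
      refine measure_mono_null (fun ω hω => ?_)
        (measure_pullCount_pos_eq_zero (X := X) (k := i) (fun s => ?_) n)
      · rw [Set.mem_ofPred_eq, ← (hω : A ω = i)]
        exact pullCount_pos_of_forall_le hn (hA ω)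
      · rw [← measureReal_eq_zero_iff, hp, ← hi]
    rw [measureReal_def, hnull, ENNReal.toReal_zero, ← hi, Real.sqrt_zero, sub_zero,
      Real.sq_sqrt (hi.le.trans hpij)]
    exact pow_nonneg (sub_nonneg.mpr (hp 0 j ▸ measureReal_le_one)) n
  · exact (measureReal_mono fun ω (hω : A ω = i) => hω ▸ hA ω j).trans
      (measureReal_pullCount_le_pullCount_le hX hindep hp hij hi hpij n)

theorem sum_measureReal_eq_le_of_forall_pullCount_le {X : ℕ → Ω → α}
    (hX : ∀ s, Measurable (X s)) (hindep : iIndepFun X P)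
    (hp : ∀ s k, P.real {ω | X s ω = k} = p k) {A : ℕ → Ω → α}
    (hA : ∀ t ω k, pullCount X (t + 1) k ω ≤ pullCount X (t + 1) (A t ω) ω) (hij : i ≠ j)
    (hpij : p i < p j) (T : ℕ) :
    ∑ t ∈ range T, P.real {ω | A t ω = i} ≤ ((√(p j) - √(p i)) ^ 2)⁻¹ := by
  have hsqrt : √(p i) < √(p j) :=
    Real.sqrt_lt_sqrt (hp 0 i ▸ measureReal_nonneg) hpij
  set ρ := 1 - (√(p j) - √(p i)) ^ 2
  have hρ1 : ρ < 1 := sub_lt_self 1 (pow_pos (sub_pos.mpr hsqrt) 2)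
  have hρ0 : 0 ≤ ρ := by
    have hpj : (√(p j)) ^ 2 ≤ 1 := by
      rw [Real.sq_sqrt (hpij.le.trans' (hp 0 i ▸ measureReal_nonneg)), ← hp 0 j]
      exact measureReal_le_one
    have : (√(p j) - √(p i)) ^ 2 ≤ (√(p j)) ^ 2 :=
      pow_le_pow_left₀ (sub_nonneg.mpr hsqrt.le) (sub_le_self _ (Real.sqrt_nonneg _)) 2
    linarith
  calc ∑ t ∈ range T, P.real {ω | A t ω = i}
      ≤ ∑ t ∈ range T, ρ ^ t := sum_le_sum fun t _ =>
        (measureReal_eq_le_of_forall_pullCount_le hX hindep hp t.succ_pos (hA t) hij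
          hpij.le).trans (pow_le_pow_of_le_one hρ0 hρ1.le t.le_succ)
    _ ≤ ρ ^ 0 / (1 - ρ) := by
        rw [range_eq_Ico]; exact geom_sum_Ico_le_of_lt_one hρ0 hρ1
    _ = ((√(p j) - √(p i)) ^ 2)⁻¹ := by simp [ρ]

end Chernoff

theorem most_frequent_arm_finite_regret_general {Ω : Type*} [MeasurableSpace Ω]
    (P : Measure Ω) [IsProbabilityMeasure P]
    (N : ℕ) (μa : Fin N → ℝ) (jstar : Fin N)
    (hmax : ∀ i, i ≠ jstar → μa i < μa jstar)
    (f : Fin N → ℝ)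
    (h : ℕ → Ω → Fin N) (hmeas : ∀ s, Measurable (h s))
    (hindep : iIndepFun h P)
    (hdist : ∀ (s : ℕ) (k : Fin N), P {ω | h s ω = k} = ENNReal.ofReal (f k))
    (hf : ∀ i, i ≠ jstar → f i < f jstar)
    (A : ℕ → Ω → Fin N)
    (hAmeas : ∀ t : ℕ,
      Measurable[MeasurableSpace.comap (fun ω (s : Fin (t + 1)) => h s.val ω) inferInstance]
        (A t))
    (hAfreq : ∀ (t : ℕ) (ω : Ω) (i : Fin N),
      ((Finset.range (t + 1)).filter fun s => h s ω = i).card ≤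
        ((Finset.range (t + 1)).filter fun s => h s ω = A t ω).card)
    (T : ℕ) :
    ∑ t ∈ Finset.range T, ∫ ω, (μa jstar - μa (A t ω)) ∂P ≤
      ∑ i ∈ Finset.univ.filter (· ≠ jstar),
        (μa jstar - μa i) / (Real.sqrt (f jstar) - Real.sqrt (f i)) ^ 2 := by
  -- `hdist` only determines `max (f k) 0`, which has the same square root as `f k`.
  set p : Fin N → ℝ := fun k => max (f k) 0
  have hp : ∀ s k, P.real {ω | h s ω = k} = p k := fun s k => by
    rw [measureReal_def, hdist, ENNReal.toReal_ofReal']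
  have hsqrt : ∀ k, √(f k) = √(p k) := fun k => by
    rcases le_total (f k) 0 with hk | hk <;> simp [p, hk, Real.sqrt_eq_zero_of_nonpos]
  have hsum : ∑ k, p k = 1 := by
    simpa only [hp] using sum_measureReal_fiber_eq_one (P := P) (hmeas 0)
  have hpj : 0 < p jstar := by
    by_contra! hle
    have : ∑ k, p k ≤ 0 := sum_nonpos fun k _ => by
      rcases eq_or_ne k jstar with rfl | hk
      exacts [hle, (max_le_max_right 0 (hf k hk).le).trans hle]
    linarith
  have hlt : ∀ i, i ≠ jstar → p i < p jstar := fun i hi =>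
    max_lt ((hf i hi).trans_le (le_max_left _ _)) hpj
  have hAm : ∀ t, Measurable (A t) := fun t =>
    (hAmeas t).mono (Measurable.comap_le (measurable_pi_lambda _ fun s => hmeas s.val)) le_rfl
  have hregret : ∀ t, ∫ ω, (μa jstar - μa (A t ω)) ∂P =
      ∑ i ∈ univ.filter (· ≠ jstar), P.real {ω | A t ω = i} * (μa jstar - μa i) := fun t => by
    rw [integral_comp_eq_sum_measureReal (hAm t) (fun k => μa jstar - μa k)]
    refine (sum_filter_of_ne fun k _ hk => ?_).symm
    rintro rfl
    simp at hk
  simp only [hregret, hsqrt]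
  rw [sum_comm]
  refine sum_le_sum fun i hi => ?_
  have hij : i ≠ jstar := (mem_filter.mp hi).2
  rw [← sum_mul, div_eq_inv_mul]
  exact mul_le_mul_of_nonneg_right
    (sum_measureReal_eq_le_of_forall_pullCount_le hmeas hindep hp hAfreq hij (hlt i hij) T)
    (sub_nonneg.mpr (hmax i hij).le)

/-- assisting a noisily-optimal human has finite expected regret.
The human's pulls `h 0, h 1, …` are i.i.d. with `P(h s = k) = f k`, where the
(unique) optimal arm `j*` has strictly largest probability. At each round `t`
the robot plays `A t`, a most frequently pulled arm among `h 0, …, h t`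
(measurable with respect to those pulls). Then for every horizon `T`, the expected
regret is at most `∑_{i ≠ j*} (μ* - μ i) / (√(f j*) - √(f i))²`. -/
theorem most_frequent_arm_finite_regret {Ω : Type*} [MeasurableSpace Ω]
    (P : Measure Ω) [IsProbabilityMeasure P]
    (N : ℕ) (hN : 2 ≤ N) (μa : Fin N → ℝ) (jstar : Fin N)
    (hmax : ∀ i, i ≠ jstar → μa i < μa jstar)
    (f : Fin N → ℝ)
    (h : ℕ → Ω → Fin N) (hmeas : ∀ s, Measurable (h s))
    (hindep : iIndepFun h P)
    (hdist : ∀ (s : ℕ) (k : Fin N), P {ω | h s ω = k} = ENNReal.ofReal (f k))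
    (hf : ∀ i, i ≠ jstar → f i < f jstar)
    (A : ℕ → Ω → Fin N)
    (hAmeas : ∀ t : ℕ,
      Measurable[MeasurableSpace.comap (fun ω (s : Fin (t + 1)) => h s.val ω) inferInstance]
        (A t))
    (hAfreq : ∀ (t : ℕ) (ω : Ω) (i : Fin N),
      ((Finset.range (t + 1)).filter fun s => h s ω = i).card ≤
        ((Finset.range (t + 1)).filter fun s => h s ω = A t ω).card)
    (T : ℕ) :
    ∑ t ∈ Finset.range T, ∫ ω, (μa jstar - μa (A t ω)) ∂P ≤
      ∑ i ∈ Finset.univ.filter (· ≠ jstar),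
        (μa jstar - μa i) / (Real.sqrt (f jstar) - Real.sqrt (f i)) ^ 2 :=
  most_frequent_arm_finite_regret_general P N μa jstar hmax f h hmeas hindep hdist hf A hAmeas
    hAfreq T
end

section
/- Let 0 < μ < θ < 1 and let Y_1, Y_2, … be i.i.d. Bernoulli(θ). Consider the greedy process on two arms, where arm 0 has known deterministic value μ and arm 1 is the Bernoulli arm: arm 1 is pulled at time 1; thereafter, at each time t, arm 1 is pulled if and only if the empirical mean of the arm-1 rewards observed so far is at least μ. Let R(T) = (θ - μ)·#{t ≤ T : arm 0 is pulled at time t} be the regret up to time T. Then liminf_{T→∞} E[R(T)]/T ≥ (1 - θ)(θ - μ) > 0; in particular the process is inconsistent (its expected average regret does not converge to 0). -/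
/-!
With probability at least `1 - θ` the first reward of arm 1 is `0 < μ`. The empirical mean of
arm 1 is then `0` and it is never pulled again, since its mean can only change by pulling it;
on this event the regret up to time `T` is `(θ - μ)(T - 1)`. Hence
`E[R(T)]/T ≥ (1 - θ)(θ - μ)(1 - 1/T)`.
-/

open MeasureTheory ProbabilityTheory Filter
open scoped Classical

noncomputable def arm1Pulls (μ : ℝ) (y : ℕ → ℝ) : ℕ → ℕ
  | 0 => 0
  | 1 => 1
  | (t + 2) =>
      arm1Pulls μ y (t + 1) +
        if μ ≤ (∑ n ∈ Finset.range (arm1Pulls μ y (t + 1)), y n) / (arm1Pulls μ y (t + 1) : ℝ)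
        then 1 else 0

open Topology

lemma le_liminf_of_tendsto_of_eventually_le {ι : Type*} {l : Filter ι} [l.NeBot]
    {a b : ι → ℝ} {c B : ℝ} (hb : Tendsto b l (𝓝 c)) (hba : ∀ᶠ i in l, b i ≤ a i)
    (haB : ∀ᶠ i in l, a i ≤ B) : c ≤ l.liminf a :=
  calc c = l.liminf b := hb.liminf_eq.symm
    _ ≤ l.liminf a :=
      liminf_le_liminf hba hb.isBoundedUnder_ge (isCoboundedUnder_ge_of_eventually_le l haB)

lemma arm1Pulls_le (μ : ℝ) (y : ℕ → ℝ) : ∀ t, arm1Pulls μ y t ≤ t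
  | 0 => le_rfl
  | 1 => le_rfl
  | t + 2 => by
      have := arm1Pulls_le μ y (t + 1)
      simp only [arm1Pulls]
      split <;> omega

lemma arm1Pulls_eq_one_of_lt {μ : ℝ} {y : ℕ → ℝ} (hy : y 0 < μ) :
    ∀ t, 1 ≤ t → arm1Pulls μ y t = 1
  | 1, _ => rfl
  | t + 2, _ => by
      have h := arm1Pulls_eq_one_of_lt hy (t + 1) (by omega)
      simp [arm1Pulls, h, hy]

lemma measurable_arm1Pulls {Ω : Type*} [MeasurableSpace Ω] (μ : ℝ) {Y : ℕ → Ω → ℝ}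
    (hY : ∀ n, Measurable (Y n)) : ∀ t, Measurable fun ω => arm1Pulls μ (Y · ω) t
  | 0 => measurable_const
  | 1 => measurable_const
  | t + 2 => by
      have ih := measurable_arm1Pulls μ hY (t + 1)
      simp only [arm1Pulls]
      refine ih.add (Measurable.ite ?_ measurable_const measurable_const)
      have hset : {ω | μ ≤ (∑ n ∈ Finset.range (arm1Pulls μ (Y · ω) (t + 1)), Y n ω) /
          (arm1Pulls μ (Y · ω) (t + 1) : ℝ)} =
          ⋃ k : ℕ, {ω | arm1Pulls μ (Y · ω) (t + 1) = k} ∩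
            {ω | μ ≤ (∑ n ∈ Finset.range k, Y n ω) / (k : ℝ)} := by
        ext ω
        simp
      rw [hset]
      exact .iUnion fun k => (ih (measurableSet_singleton k)).inter
        (measurableSet_le measurable_const ((Finset.measurable_sum _ fun n _ => hY n).div_const _))

section Regret

variable {Ω : Type*} [MeasurableSpace Ω] {P : Measure Ω} {μ Δ : ℝ} {Y : ℕ → Ω → ℝ}

lemma integrable_regret [IsFiniteMeasure P] (hY : ∀ n, Measurable (Y n)) (T : ℕ) :
    Integrable (fun ω => Δ * ((T : ℝ) - arm1Pulls μ (Y · ω) T)) P := by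
  refine (integrable_const (|Δ| * T)).mono'
    (((measurable_from_top.comp (measurable_arm1Pulls μ hY T)).const_sub (T : ℝ)).const_mul Δ).aestronglyMeasurable
    (ae_of_all _ fun ω => ?_)
  have hle : (arm1Pulls μ (Y · ω) T : ℝ) ≤ T := by exact_mod_cast arm1Pulls_le μ _ T
  rw [norm_mul, Real.norm_eq_abs, Real.norm_of_nonneg (sub_nonneg.mpr hle)]
  gcongr
  linarith [(arm1Pulls μ (Y · ω) T).cast_nonneg (α := ℝ)]

lemma integral_regret_le [IsProbabilityMeasure P] (hY : ∀ n, Measurable (Y n)) (hΔ : 0 ≤ Δ)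
    (T : ℕ) : ∫ ω, Δ * ((T : ℝ) - arm1Pulls μ (Y · ω) T) ∂P ≤ Δ * T := by
  calc ∫ ω, Δ * ((T : ℝ) - arm1Pulls μ (Y · ω) T) ∂P ≤ ∫ _, Δ * T ∂P :=
        integral_mono (integrable_regret hY T) (integrable_const _) fun ω => by
          have := (arm1Pulls μ (Y · ω) T).cast_nonneg (α := ℝ)
          dsimp only
          gcongr
          linarith
    _ = Δ * T := by simp

lemma mul_measureReal_le_integral_regret [IsFiniteMeasure P] (hY : ∀ n, Measurable (Y n))
    (hΔ : 0 ≤ Δ) {T : ℕ} (hT : 1 ≤ T) :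
    Δ * ((T : ℝ) - 1) * P.real {ω | Y 0 ω < μ} ≤
      ∫ ω, Δ * ((T : ℝ) - arm1Pulls μ (Y · ω) T) ∂P := by
  have hA : MeasurableSet {ω | Y 0 ω < μ} := measurableSet_lt (hY 0) measurable_const
  calc Δ * ((T : ℝ) - 1) * P.real {ω | Y 0 ω < μ}
      = ∫ ω in {ω | Y 0 ω < μ}, Δ * ((T : ℝ) - arm1Pulls μ (Y · ω) T) ∂P := by
        rw [setIntegral_congr_fun hA fun ω hω => by
          rw [arm1Pulls_eq_one_of_lt (y := (Y · ω)) hω T hT, Nat.cast_one]]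
        rw [setIntegral_const, smul_eq_mul, mul_comm]
    _ ≤ ∫ ω, Δ * ((T : ℝ) - arm1Pulls μ (Y · ω) T) ∂P :=
        setIntegral_le_integral (integrable_regret hY T) (ae_of_all _ fun ω =>
          mul_nonneg hΔ (sub_nonneg.mpr (by exact_mod_cast arm1Pulls_le μ _ T)))

end Regret

lemma one_sub_le_measureReal_lt {Ω : Type*} [MeasurableSpace Ω] {P : Measure Ω}
    [IsProbabilityMeasure P] {X : Ω → ℝ} {μ θ : ℝ} (hX : Measurable X) (hμ : 0 < μ)
    (hval : ∀ ω, X ω = 0 ∨ X ω = 1) (hdist : P {ω | X ω = 1} = ENNReal.ofReal θ) (hθ : 0 ≤ θ) :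
    1 - θ ≤ P.real {ω | X ω < μ} := by
  have hsub : {ω | X ω = 1}ᶜ ⊆ {ω | X ω < μ} := fun ω hω => by
    rcases hval ω with h | h
    · simp [h, hμ]
    · exact absurd h hω
  calc 1 - θ = P.real {ω | X ω = 1}ᶜ := by
        rw [probReal_compl_eq_one_sub (measurableSet_eq_fun hX measurable_const), measureReal_def, hdist,
          ENNReal.toReal_ofReal hθ]
    _ ≤ P.real {ω | X ω < μ} := measureReal_mono hsub

theorem greedy_inconsistent_general {Ω : Type*} [MeasurableSpace Ω]
    (P : Measure Ω) [IsProbabilityMeasure P]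
    (μval θ : ℝ) (hμ : 0 < μval) (hμθ : μval < θ) (hθ : θ < 1)
    (Y : ℕ → Ω → ℝ) (hY : ∀ n, Measurable (Y n))
    (hval : ∀ n ω, Y n ω = 0 ∨ Y n ω = 1)
    (hdist : ∀ n, P {ω | Y n ω = 1} = ENNReal.ofReal θ) :
    0 < (1 - θ) * (θ - μval) ∧
    (1 - θ) * (θ - μval) ≤
      atTop.liminf (fun T : ℕ =>
        (∫ ω, (θ - μval) * ((T : ℝ) - (arm1Pulls μval (Y · ω) T : ℝ)) ∂P) / T) ∧
    ¬ Tendsto (fun T : ℕ =>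
        (∫ ω, (θ - μval) * ((T : ℝ) - (arm1Pulls μval (Y · ω) T : ℝ)) ∂P) / T)
      atTop (nhds 0) := by
  set c := (1 - θ) * (θ - μval)
  have hgap : 0 < θ - μval := sub_pos.mpr hμθ
  have hc : 0 < c := mul_pos (sub_pos.mpr hθ) hgap
  have hfirstLow := one_sub_le_measureReal_lt (P := P) (hY 0) hμ (hval 0) (hdist 0) (by linarith)
  have hlow : ∀ᶠ T : ℕ in atTop, c - c / T ≤
      (∫ ω, (θ - μval) * ((T : ℝ) - arm1Pulls μval (Y · ω) T) ∂P) / T := by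
    filter_upwards [eventually_ge_atTop 1] with T hT
    have hT' : (1 : ℝ) ≤ T := by exact_mod_cast hT
    rw [le_div_iff₀ (by linarith), sub_mul, div_mul_cancel₀ _ (by linarith)]
    calc c * T - c = (θ - μval) * ((T : ℝ) - 1) * (1 - θ) := by ring
      _ ≤ (θ - μval) * ((T : ℝ) - 1) * P.real {ω | Y 0 ω < μval} := by gcongr
      _ ≤ _ := mul_measureReal_le_integral_regret hY hgap.le hT
  have hupp : ∀ᶠ T : ℕ in atTop,
      (∫ ω, (θ - μval) * ((T : ℝ) - arm1Pulls μval (Y · ω) T) ∂P) / T ≤ θ - μval := by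
    filter_upwards [eventually_ge_atTop 1] with T hT
    rw [div_le_iff₀ (by exact_mod_cast hT)]
    exact integral_regret_le hY hgap.le T
  have hliminf : c ≤ _ := le_liminf_of_tendsto_of_eventually_le
    (by simpa using tendsto_const_nhds.sub (tendsto_const_div_atTop_nhds_zero_nat c)) hlow hupp
  refine ⟨hc, hliminf, fun hzero => ?_⟩
  rw [hzero.liminf_eq] at hliminf
  exact hliminf.not_gt hc

/-- inconsistency of the greedy learner on a `1½`-arm bandit. With
`0 < μ < θ < 1`, arm 0 of known value `μ` and arm 1 with i.i.d. Bernoulli(θ) rewards,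
the regret up to time `T` is `R(T) = (θ - μ) · #{t ≤ T : arm 0 pulled}`. Then
`liminf_T E[R(T)]/T ≥ (1 - θ)(θ - μ) > 0`; in particular the expected average regret
does not converge to `0`. -/
theorem greedy_inconsistent {Ω : Type*} [MeasurableSpace Ω]
    (P : Measure Ω) [IsProbabilityMeasure P]
    (μval θ : ℝ) (hμ : 0 < μval) (hμθ : μval < θ) (hθ : θ < 1)
    (Y : ℕ → Ω → ℝ) (hY : ∀ n, Measurable (Y n))
    (hindep : iIndepFun Y P)
    (hval : ∀ n ω, Y n ω = 0 ∨ Y n ω = 1)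
    (hdist : ∀ n, P {ω | Y n ω = 1} = ENNReal.ofReal θ) :
    0 < (1 - θ) * (θ - μval) ∧
    (1 - θ) * (θ - μval) ≤
      atTop.liminf (fun T : ℕ =>
        (∫ ω, (θ - μval) * ((T : ℝ) - (arm1Pulls μval (Y · ω) T : ℝ)) ∂P) / T) ∧
    ¬ Tendsto (fun T : ℕ =>
        (∫ ω, (θ - μval) * ((T : ℝ) - (arm1Pulls μval (Y · ω) T : ℝ)) ∂P) / T)
      atTop (nhds 0) :=
  greedy_inconsistent_general P μval θ hμ hμθ hθ Y hY hval hdist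
end

section
/- Fix N ≥ 2, a horizon T, and a reward realization ρ : {1,…,T} × {1,…,N} → {0,1} (ρ(t,k) is the reward obtained if arm k is pulled at round t). Let K be any bandit strategy, i.e. a function mapping each history ((a_1, r_1), …, (a_{t-1}, r_{t-1})) of arms and binary rewards to an arm K_t ∈ {1,…,N}. Suppose the human plays win-stay-lose-shift: h_1 is arbitrary, and for t ≥ 2, h_t = a_{t-1} if r_{t-1} = 1 and h_t ≠ a_{t-1} if r_{t-1} = 0. Define the robot strategy A as follows: at round t it decodes r̂_{t-1} = 1 if h_t = a_{t-1} and r̂_{t-1} = 0 otherwise, and plays a_t = K_t((a_1, r̂_1), …, (a_{t-1}, r̂_{t-1})). Then for every sequence of human suggestions consistent with WSLS, the executed arm sequence (a_1, …, a_T) equals the arm sequence that K itself would produce when run directly on the reward realization ρ; in particular the two incur identical rewards and identical regret. -/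
/-- The history of (arm, reward) pairs produced by running the bandit strategy `K`
directly on the reward realization `ρ` for `t` rounds. -/
def directHist {N : ℕ} (K : List (Fin N × Fin 2) → Fin N) (ρ : ℕ → Fin N → Fin 2) :
    ℕ → List (Fin N × Fin 2)
  | 0 => []
  | t + 1 =>
      directHist K ρ t ++ [(K (directHist K ρ t), ρ t (K (directHist K ρ t)))]

/-- The arm that the bandit strategy `K`, run directly on the reward realization `ρ`,
pulls at round `t`. -/
def directRun {N : ℕ} (K : List (Fin N × Fin 2) → Fin N) (ρ : ℕ → Fin N → Fin 2)
    (t : ℕ) : Fin N :=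
  K (directHist K ρ t)

/-! Under win-stay-lose-shift the suggestion `h (t+1)` equals the executed arm `a t`
exactly when round `t` paid `1`, so the robot's decoded history is the true history
of arms and rewards. A robot that feeds its own true history to `K` is, by strong
induction on the round, pulling the same arms as `K` run directly on `ρ`. -/

lemma ite_eq_of_winStay_loseShift {α : Type*} [DecidableEq α] {x y : α} {r : Fin 2}
    (hwin : r = 1 → x = y) (hlose : r = 0 → x ≠ y) :
    (if x = y then (1 : Fin 2) else 0) = r := by
  fin_cases r
  · exact if_neg (hlose rfl)
  · exact if_pos (hwin rfl)

section DirectRun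

variable {N : ℕ} (K : List (Fin N × Fin 2) → Fin N) (ρ : ℕ → Fin N → Fin 2)

lemma directHist_eq_ofFn (t : ℕ) :
    directHist K ρ t =
      List.ofFn fun s : Fin t => (directRun K ρ s, ρ s (directRun K ρ s)) := by
  induction t with
  | zero => rfl
  | succ t ih =>
    rw [List.ofFn_succ', List.concat_eq_append]
    simp only [Fin.val_castSucc, Fin.val_last]
    rw [← ih]
    rfl

lemma eq_directRun_of_forall_eq_apply_ofFn {a : ℕ → Fin N}
    (ha : ∀ t, a t = K (List.ofFn fun s : Fin t => (a s, ρ s (a s)))) (t : ℕ) :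
    a t = directRun K ρ t := by
  induction t using Nat.strong_induction_on with
  | _ t ih =>
    rw [ha t, directRun, directHist_eq_ofFn]
    congr 2
    funext s
    rw [ih s s.isLt]

end DirectRun

theorem wsls_simulates_any_strategy_general {N : ℕ} (T : ℕ)
    (ρ : ℕ → Fin N → Fin 2) (K : List (Fin N × Fin 2) → Fin N)
    (h a : ℕ → Fin N)
    (hWSLS : ∀ t : ℕ,
      (ρ t (a t) = 1 → h (t + 1) = a t) ∧ (ρ t (a t) = 0 → h (t + 1) ≠ a t))
    (hRobot : ∀ t : ℕ, a t =
      K (List.ofFn fun s : Fin t =>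
        (a s.val, if h (s.val + 1) = a s.val then (1 : Fin 2) else 0))) :
    ∀ t < T, a t = directRun K ρ t ∧ ρ t (a t) = ρ t (directRun K ρ t) := by
  have hdecode : ∀ s, (if h (s + 1) = a s then (1 : Fin 2) else 0) = ρ s (a s) :=
    fun s => ite_eq_of_winStay_loseShift (hWSLS s).1 (hWSLS s).2
  have hrun := eq_directRun_of_forall_eq_apply_ofFn K ρ fun t => by
    simpa only [hdecode] using hRobot t
  intro t _
  exact ⟨hrun t, congrArg (ρ t) (hrun t)⟩

/-- a WSLS human lets the robot simulate any bandit strategy. Suppose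
the human plays win-stay-lose-shift (`h (t+1) = a t` iff round `t`'s reward was `1`),
and the robot at each round decodes the previous reward as `1` iff `h (t+1) = a t`
and plays the strategy `K` on the decoded history. Then the executed arm sequence
equals the arm sequence `K` would produce when run directly on the reward realization
`ρ`; in particular the rewards incurred are identical. -/
theorem wsls_simulates_any_strategy {N : ℕ} (hN : 2 ≤ N) (T : ℕ)
    (ρ : ℕ → Fin N → Fin 2) (K : List (Fin N × Fin 2) → Fin N)
    (h a : ℕ → Fin N)
    (hWSLS : ∀ t : ℕ,
      (ρ t (a t) = 1 → h (t + 1) = a t) ∧ (ρ t (a t) = 0 → h (t + 1) ≠ a t))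
    (hRobot : ∀ t : ℕ, a t =
      K (List.ofFn fun s : Fin t =>
        (a s.val, if h (s.val + 1) = a s.val then (1 : Fin 2) else 0))) :
    ∀ t < T, a t = directRun K ρ t ∧ ρ t (a t) = ρ t (directRun K ρ t) :=
  wsls_simulates_any_strategy_general T ρ K h a hWSLS hRobot
end
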